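/- arXiv:2305.14974 — 2 statements merged into one kernel-verified Lean document; each statement's English description precedes it below -/
import Mathlib

section
/- Let N ≥ 1 and let Z₁, …, Z_N be nonempty finite types. Let π be a probability mass function on Z₁ with π z > 0 for all z; for k = 1, …, N−1 let P_k : Z_k → Z_{k+1} → ℝ be a transition kernel with P_k z a probability mass function on Z_{k+1} and P_k z z' > 0 for all z, z'; and let ω : Z_N → ℝ satisfy 0 < ω z ≤ 1 for all z. Define forward marginals α₁ = π and α_{k+1}(z') = ∑_z α_k(z) · P_k z z', and backward likelihoods b_N = ω and b_k(z) = ∑_{z'} P_k z z' · b_{k+1}(z'), and the likelihood L = ∑_z α_N(z) · ω(z). Then for any probability mass functions q₁, …, q_N with q_k on Z_k: −log L ≤ (1/N) · ∑_{k=1}^N [ ∑_z q_k(z) · log (q_k(z)/α_k(z)) − ∑_z q_k(z) · log (b_k(z)) ], with the convention 0 · log 0 = 0. -/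
/-!
Fix a block `k`. Since the forward messages propagate by `α (k+1) = α k ᵥ* P k` and the backward
ones by `b k = P k *ᵥ b (k+1)`, associativity of the matrix product makes `∑ α k * b k` independent
of `k`, so it equals `L`. Hence `p = α k * b k / L` is a probability vector (the posterior of
`z_k`), and Gibbs' inequality `KL(q_k ‖ p) ≥ 0` expands to
`-log L ≤ KL(q_k ‖ α k) - E_{q_k}[log b k]`. Averaging over the `N` blocks gives the bound.
-/

open Finset Matrix
open Real (log)

section Positivity

variable {m n R : Type*} [Fintype m] [Nonempty m] [Semiring R] [PartialOrder R]
  [IsStrictOrderedRing R]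

lemma Matrix.vecMul_pos {v : m → R} {A : Matrix m n R} (hv : ∀ i, 0 < v i)
    (hA : ∀ i j, 0 < A i j) (j : n) : 0 < (v ᵥ* A) j :=
  sum_pos (fun i _ => mul_pos (hv i) (hA i j)) univ_nonempty

lemma Matrix.mulVec_pos {A : Matrix n m R} {v : m → R} (hA : ∀ i j, 0 < A i j)
    (hv : ∀ j, 0 < v j) (i : n) : 0 < (A *ᵥ v) i :=
  sum_pos (fun j _ => mul_pos (hA i j) (hv j)) univ_nonempty

end Positivity

section Gibbs

lemma sub_le_mul_log_div {p q : ℝ} (hp : 0 < p) (hq : 0 ≤ q) : q - p ≤ q * log (q / p) := by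
  have h := mul_nonneg hp.le (InformationTheory.klFun_nonneg (div_nonneg hq hp.le))
  rw [InformationTheory.klFun_apply] at h
  field_simp at h
  linarith

variable {ι : Type*} [Fintype ι]

lemma sum_mul_log_div_nonneg {p q : ι → ℝ} (hp : ∀ i, 0 < p i) (hq : ∀ i, 0 ≤ q i)
    (hpq : ∑ i, p i ≤ ∑ i, q i) : 0 ≤ ∑ i, q i * log (q i / p i) :=
  calc 0 ≤ ∑ i, (q i - p i) := by rw [sum_sub_distrib]; linarith
    _ ≤ _ := sum_le_sum fun i _ => sub_le_mul_log_div (hp i) (hq i)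

lemma mul_log_div_mul_div {q a b L : ℝ} (ha : 0 < a) (hb : 0 < b) (hL : 0 < L) :
    q * log (q / (a * b / L)) = q * log (q / a) - q * log b + q * log L := by
  rcases eq_or_ne q 0 with rfl | hq
  · simp
  rw [show q / (a * b / L) = q / a / b * L by field_simp, Real.log_mul (by positivity) hL.ne',
    Real.log_div (by positivity) hb.ne']
  ring

lemma neg_log_sum_mul_le [Nonempty ι] {q a b : ι → ℝ} (hq : ∀ i, 0 ≤ q i) (hq1 : ∑ i, q i = 1)
    (ha : ∀ i, 0 < a i) (hb : ∀ i, 0 < b i) :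
    -log (∑ i, a i * b i) ≤ ∑ i, q i * log (q i / a i) - ∑ i, q i * log (b i) := by
  set L := ∑ i, a i * b i
  have hL : 0 < L := sum_pos (fun i _ => mul_pos (ha i) (hb i)) univ_nonempty
  have hposterior : ∑ i, a i * b i / L = 1 := by rw [← sum_div, div_self hL.ne']
  have hgibbs := sum_mul_log_div_nonneg (fun i => div_pos (mul_pos (ha i) (hb i)) hL) hq
    (hposterior.trans hq1.symm).le
  simp only [mul_log_div_mul_div (ha _) (hb _) hL, sum_add_distrib, sum_sub_distrib,
    ← sum_mul, hq1, one_mul] at hgibbs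
  linarith

end Gibbs

section MarkovChain

variable {Z : ℕ → Type*} [∀ k, Fintype (Z k)] {N : ℕ} {P : ∀ k, Z k → Z (k + 1) → ℝ}
  {α b : ∀ k, Z k → ℝ}

lemma forward_pos [∀ k, Nonempty (Z k)]
    (hP : ∀ k, 1 ≤ k → k < N → ∀ (z : Z k) (z' : Z (k + 1)), 0 < P k z z')
    (hα : ∀ k, 1 ≤ k → k < N → ∀ z' : Z (k + 1), α (k + 1) z' = ∑ z, α k z * P k z z')
    (hα1 : ∀ z, 0 < α 1 z) : ∀ k, 1 ≤ k → k ≤ N → ∀ z, 0 < α k z := by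
  intro k hk
  induction k, hk using Nat.le_induction with
  | base => exact fun _ => hα1
  | succ k hk ih =>
    intro hkN z
    rw [hα k hk hkN z]
    exact vecMul_pos (ih (by omega)) (hP k hk hkN) z

lemma backward_pos [∀ k, Nonempty (Z k)]
    (hP : ∀ k, 1 ≤ k → k < N → ∀ (z : Z k) (z' : Z (k + 1)), 0 < P k z z')
    (hb : ∀ k, 1 ≤ k → k < N → ∀ z : Z k, b k z = ∑ z', P k z z' * b (k + 1) z')
    (hbN : ∀ z, 0 < b N z) : ∀ k, 1 ≤ k → k ≤ N → ∀ z, 0 < b k z := by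
  intro k hk hkN
  induction hkN using Nat.decreasingInduction with
  | self => exact hbN
  | of_succ k hkN ih =>
    intro z
    rw [hb k hk hkN z]
    exact mulVec_pos (hP k hk hkN) (ih (by omega)) z

lemma sum_forward_mul_backward_eq
    (hα : ∀ k, 1 ≤ k → k < N → ∀ z' : Z (k + 1), α (k + 1) z' = ∑ z, α k z * P k z z')
    (hb : ∀ k, 1 ≤ k → k < N → ∀ z : Z k, b k z = ∑ z', P k z z' * b (k + 1) z') :
    ∀ k, 1 ≤ k → k ≤ N → ∑ z, α k z * b k z = ∑ z, α N z * b N z := by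
  intro k hk hkN
  induction hkN using Nat.decreasingInduction with
  | self => rfl
  | of_succ k hkN ih =>
    have hαk : α (k + 1) = α k ᵥ* of (P k) := funext (hα k hk hkN)
    have hbk : b k = of (P k) *ᵥ b (k + 1) := funext (hb k hk hkN)
    calc ∑ z, α k z * b k z = α k ⬝ᵥ b k := rfl
      _ = α (k + 1) ⬝ᵥ b (k + 1) := by rw [hbk, dotProduct_mulVec, hαk]
      _ = _ := ih (by omega)

end MarkovChain

theorem variational_bound_general (N : ℕ) (hN : 1 ≤ N)
    (Z : ℕ → Type*) [∀ k, Fintype (Z k)] [∀ k, Nonempty (Z k)]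
    (π : Z 1 → ℝ) (hπ_pos : ∀ z, 0 < π z)
    (P : ∀ k : ℕ, Z k → Z (k + 1) → ℝ)
    (hP_pos : ∀ k, 1 ≤ k → k < N → ∀ (z : Z k) (z' : Z (k + 1)), 0 < P k z z')
    (ω : Z N → ℝ) (hω_pos : ∀ z, 0 < ω z)
    (α : ∀ k : ℕ, Z k → ℝ)
    (hα1 : ∀ z, α 1 z = π z)
    (hα : ∀ k, 1 ≤ k → k < N → ∀ z' : Z (k + 1), α (k + 1) z' = ∑ z, α k z * P k z z')
    (b : ∀ k : ℕ, Z k → ℝ)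
    (hbN : ∀ z, b N z = ω z)
    (hb : ∀ k, 1 ≤ k → k < N → ∀ z : Z k, b k z = ∑ z', P k z z' * b (k + 1) z')
    (L : ℝ) (hL : L = ∑ z, α N z * ω z)
    (q : ∀ k : ℕ, Z k → ℝ)
    (hq_sum : ∀ k, 1 ≤ k → k ≤ N → ∑ z, q k z = 1)
    (hq_nonneg : ∀ k z, 0 ≤ q k z) :
    -Real.log L ≤ (1 / (N : ℝ)) * ∑ k ∈ Finset.Icc 1 N,
      (∑ z, q k z * Real.log (q k z / α k z) - ∑ z, q k z * Real.log (b k z)) := by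
  have hα_pos := forward_pos hP_pos hα fun z => hα1 z ▸ hπ_pos z
  have hb_pos := backward_pos hP_pos hb fun z => hbN z ▸ hω_pos z
  have hblock : ∀ k ∈ Icc 1 N, -log L ≤
      ∑ z, q k z * log (q k z / α k z) - ∑ z, q k z * log (b k z) := by
    intro k hk
    obtain ⟨hk1, hkN⟩ := mem_Icc.mp hk
    have hL_eq : ∑ z, α k z * b k z = L := by
      rw [sum_forward_mul_backward_eq hα hb k hk1 hkN, hL]
      simp only [hbN]
    simpa only [hL_eq] using neg_log_sum_mul_le (hq_nonneg k) (hq_sum k hk1 hkN)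
      (hα_pos k hk1 hkN) (hb_pos k hk1 hkN)
  have havg := le_expect (nonempty_Icc.mpr hN) hblock
  rwa [expect_eq_sum_div_card, Nat.card_Icc, Nat.add_sub_cancel, div_eq_inv_mul, ← one_div] at havg

/-- Base variational bound `F ≥ L` (Eq. (7)/(S4) of the paper) for a
finite-state Markov chain `x → z₁ → ⋯ → z_N → y`: with forward messages
`α k = p(z_k|x)` (defined by `α 1 = π` and the forward recursion through the
transition kernels `P k`), backward likelihoods `b k = p(y|z_k)` (defined by
`b N = ω` and the backward recursion), and likelihood `L = p(y|x)`, for any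
variational pmfs `q k`:
`-log L ≤ (1/N) ∑ₖ [ KL(q_k‖α_k) - E_{q_k}[log b_k] ]`. -/
theorem variational_bound (N : ℕ) (hN : 1 ≤ N)
    (Z : ℕ → Type*) [∀ k, Fintype (Z k)] [∀ k, Nonempty (Z k)]
    (π : Z 1 → ℝ) (hπ_sum : ∑ z, π z = 1) (hπ_pos : ∀ z, 0 < π z)
    (P : ∀ k : ℕ, Z k → Z (k + 1) → ℝ)
    (hP_sum : ∀ k, 1 ≤ k → k < N → ∀ z : Z k, ∑ z', P k z z' = 1)
    (hP_pos : ∀ k, 1 ≤ k → k < N → ∀ (z : Z k) (z' : Z (k + 1)), 0 < P k z z')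
    (ω : Z N → ℝ) (hω_pos : ∀ z, 0 < ω z) (hω_le : ∀ z, ω z ≤ 1)
    (α : ∀ k : ℕ, Z k → ℝ)
    (hα1 : ∀ z, α 1 z = π z)
    (hα : ∀ k, 1 ≤ k → k < N → ∀ z' : Z (k + 1), α (k + 1) z' = ∑ z, α k z * P k z z')
    (b : ∀ k : ℕ, Z k → ℝ)
    (hbN : ∀ z, b N z = ω z)
    (hb : ∀ k, 1 ≤ k → k < N → ∀ z : Z k, b k z = ∑ z', P k z z' * b (k + 1) z')
    (L : ℝ) (hL : L = ∑ z, α N z * ω z)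
    (q : ∀ k : ℕ, Z k → ℝ)
    (hq_sum : ∀ k, 1 ≤ k → k ≤ N → ∑ z, q k z = 1)
    (hq_nonneg : ∀ k z, 0 ≤ q k z) :
    -Real.log L ≤ (1 / (N : ℝ)) * ∑ k ∈ Finset.Icc 1 N,
      (∑ z, q k z * Real.log (q k z / α k z) - ∑ z, q k z * Real.log (b k z)) :=
  variational_bound_general N hN Z π hπ_pos P hP_pos ω hω_pos α hα1 hα b hbN hb L hL q hq_sum
    hq_nonneg
end

section
/- Let Z and W be nonempty finite types. Let q be a probability mass function on Z; for each z ∈ Z let p_z be a probability mass function on W with p_z(w) > 0 for all w; and let b : W → ℝ satisfy 0 < b(w) ≤ 1 for all w. Define the mixed forward message p̄(w) = ∑_z q(z) · p_z(w). Then for every probability mass function q' on W (with the convention 0 · log 0 = 0): −∑_z q(z) · log ( ∑_w p_z(w) · b(w) ) ≤ ∑_w q'(w) · log ( q'(w) / p̄(w) ) − ∑_z ∑_w q(z) · q'(w) · log (p_z(w)) − ∑_w q'(w) · log (b(w)). -/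
/-!
Bound `log ∑_w p_z(w) b(w)` from below, for each `z`, by Gibbs' inequality with trial
distribution `q'`; averaging over `q` gives the cross-entropy terms and `∑ q' log q'`.
The remaining gap to the right-hand side is `-∑_w q'(w) log p̄(w)`, which is nonnegative
because the mixture `p̄` of probability vectors takes values in `(0, 1]`.
-/

open Real Finset

namespace BootstrappingStep

variable {ι : Type*} {s : Finset ι}

lemma mul_log_div_le_sub {a c : ℝ} (ha : 0 ≤ a) (hc : 0 < c) : a * log (c / a) ≤ c - a := by
  rcases ha.eq_or_lt with rfl | ha
  · simpa using hc.le
  · calc a * log (c / a) ≤ a * (c / a - 1) :=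
          mul_le_mul_of_nonneg_left (log_le_sub_one_of_pos (div_pos hc ha)) ha.le
      _ = c - a := by field_simp

lemma mul_log_div_eq (x : ℝ) {y : ℝ} (hy : y ≠ 0) : x * log (x / y) = x * log x - x * log y := by
  rcases eq_or_ne x 0 with rfl | hx
  · simp
  · rw [log_div hx hy, mul_sub]

lemma mul_log_div_eq' (x : ℝ) {y : ℝ} (hy : y ≠ 0) : x * log (y / x) = x * log y - x * log x := by
  rw [← inv_div, log_inv, mul_neg, mul_log_div_eq x hy]
  ring

/-- Gibbs' inequality in variational form. -/
lemma sum_mul_log_div_le_log_sum {a c : ι → ℝ} (ha : ∀ i ∈ s, 0 ≤ a i)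
    (ha_sum : ∑ i ∈ s, a i = 1) (hc : ∀ i ∈ s, 0 < c i) :
    ∑ i ∈ s, a i * log (c i / a i) ≤ log (∑ i ∈ s, c i) := by
  set S := ∑ i ∈ s, c i
  have hs : s.Nonempty := nonempty_of_sum_ne_zero (ha_sum ▸ one_ne_zero)
  have hS : 0 < S := sum_pos hc hs
  -- compare `a` with the normalised weights `c / S`
  have hterm : ∀ i ∈ s, a i * log (c i / a i) - a i * log S ≤ c i / S - a i := by
    intro i hi
    have hcS : 0 < c i / S := div_pos (hc i hi) hS
    calc a i * log (c i / a i) - a i * log S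
        = a i * log (c i / S / a i) := by
          rw [mul_log_div_eq' _ hcS.ne', mul_log_div_eq' _ (hc i hi).ne',
            log_div (hc i hi).ne' hS.ne']
          ring
      _ ≤ c i / S - a i := mul_log_div_le_sub (ha i hi) hcS
  have hsum := sum_le_sum hterm
  rw [sum_sub_distrib, sum_sub_distrib, ← sum_mul, ← sum_div, ha_sum, div_self hS.ne'] at hsum
  linarith

lemma exists_pos_of_sum_eq_one {q : ι → ℝ} (hq_sum : ∑ i ∈ s, q i = 1) : ∃ i ∈ s, 0 < q i :=
  exists_lt_of_sum_lt (by simp [hq_sum])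

lemma sum_mul_pos_of_sum_eq_one {q f : ι → ℝ} (hq : ∀ i ∈ s, 0 ≤ q i)
    (hq_sum : ∑ i ∈ s, q i = 1) (hf : ∀ i ∈ s, 0 < f i) : 0 < ∑ i ∈ s, q i * f i := by
  obtain ⟨i, hi, hqi⟩ := exists_pos_of_sum_eq_one hq_sum
  exact sum_pos' (fun j hj => mul_nonneg (hq j hj) (hf j hj).le) ⟨i, hi, mul_pos hqi (hf i hi)⟩

lemma sum_mul_le_one_of_sum_eq_one {q f : ι → ℝ} (hq : ∀ i ∈ s, 0 ≤ q i)
    (hq_sum : ∑ i ∈ s, q i = 1) (hf : ∀ i ∈ s, f i ≤ 1) : ∑ i ∈ s, q i * f i ≤ 1 :=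
  hq_sum ▸ sum_le_sum fun i hi => mul_le_of_le_one_right (hq i hi) (hf i hi)

lemma le_one_of_sum_eq_one {p : ι → ℝ} (hp : ∀ i ∈ s, 0 ≤ p i) (hp_sum : ∑ i ∈ s, p i = 1)
    {i : ι} (hi : i ∈ s) : p i ≤ 1 :=
  hp_sum ▸ single_le_sum hp hi

end BootstrappingStep

open BootstrappingStep in
theorem bootstrapping_step_inequality_general {Z W : Type*}
    [Fintype Z] [Fintype W]
    (q : Z → ℝ) (hq_sum : ∑ z, q z = 1) (hq_nonneg : ∀ z, 0 ≤ q z)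
    (p : Z → W → ℝ)
    (hp_sum : ∀ z, ∑ w, p z w = 1) (hp_pos : ∀ z w, 0 < p z w)
    (b : W → ℝ) (hb_pos : ∀ w, 0 < b w)
    (pbar : W → ℝ) (hpbar : ∀ w, pbar w = ∑ z, q z * p z w)
    (q' : W → ℝ) (hq'_sum : ∑ w, q' w = 1) (hq'_nonneg : ∀ w, 0 ≤ q' w) :
    -∑ z, q z * Real.log (∑ w, p z w * b w) ≤
      ∑ w, q' w * Real.log (q' w / pbar w)
        - ∑ z, ∑ w, q z * q' w * Real.log (p z w)
        - ∑ w, q' w * Real.log (b w) := by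
  have hpbar_pos : ∀ w, 0 < pbar w := fun w => hpbar w ▸
    sum_mul_pos_of_sum_eq_one (fun z _ => hq_nonneg z) hq_sum (fun z _ => hp_pos z w)
  have hpbar_le : ∀ w, pbar w ≤ 1 := fun w => hpbar w ▸
    sum_mul_le_one_of_sum_eq_one (fun z _ => hq_nonneg z) hq_sum
      (fun z _ => le_one_of_sum_eq_one (fun w _ => (hp_pos z w).le) (hp_sum z) (mem_univ w))
  have hgibbs : ∀ z, ∑ w, q' w * log (p z w * b w / q' w) ≤ log (∑ w, p z w * b w) := fun z =>
    sum_mul_log_div_le_log_sum (fun w _ => hq'_nonneg w) hq'_sum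
      (fun w _ => mul_pos (hp_pos z w) (hb_pos w))
  have hlog_pbar : ∑ w, q' w * log (pbar w) ≤ 0 :=
    sum_nonpos fun w _ => mul_nonpos_of_nonneg_of_nonpos (hq'_nonneg w)
      (log_nonpos (hpbar_pos w).le (hpbar_le w))
  have hexpand : ∑ z, q z * ∑ w, q' w * log (p z w * b w / q' w) =
      ∑ z, ∑ w, q z * q' w * log (p z w) + ∑ w, q' w * log (b w) - ∑ w, q' w * log (q' w) := by
    simp only [fun z w => mul_log_div_eq' (q' w) (mul_pos (hp_pos z w) (hb_pos w)).ne',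
      fun z w => log_mul (hp_pos z w).ne' (hb_pos w).ne']
    simp only [mul_add, mul_sub, sum_add_distrib, sum_sub_distrib, ← sum_mul, hq_sum, one_mul]
    simp only [mul_sum, mul_assoc]
  have hkl : ∑ w, q' w * log (q' w / pbar w) =
      ∑ w, q' w * log (q' w) - ∑ w, q' w * log (pbar w) := by
    rw [← sum_sub_distrib]
    exact sum_congr rfl fun w _ => mul_log_div_eq _ (hpbar_pos w).ne'
  have hmix := sum_le_sum fun z (_ : z ∈ univ) => mul_le_mul_of_nonneg_left (hgibbs z) (hq_nonneg z)
  linarith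

/-- Single-step bootstrapping inequality (Eqs. (S8)–(S11) of the paper): with
variational marginal `q` on `Z`, forward transition kernels `p z` on `W`,
backward likelihood `b` with `0 < b w ≤ 1`, mixed forward message
`p̄ w = ∑_z q z * p z w`, and any pmf `q'` on `W`:
`-E_q[log ∑_w p_z(w) b(w)] ≤ KL(q'‖p̄) - E_{q,q'}[log p_z(w)] - E_{q'}[log b]`. -/
theorem bootstrapping_step_inequality {Z W : Type*}
    [Fintype Z] [Fintype W] [Nonempty Z] [Nonempty W]
    (q : Z → ℝ) (hq_sum : ∑ z, q z = 1) (hq_nonneg : ∀ z, 0 ≤ q z)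
    (p : Z → W → ℝ)
    (hp_sum : ∀ z, ∑ w, p z w = 1) (hp_pos : ∀ z w, 0 < p z w)
    (b : W → ℝ) (hb_pos : ∀ w, 0 < b w) (hb_le : ∀ w, b w ≤ 1)
    (pbar : W → ℝ) (hpbar : ∀ w, pbar w = ∑ z, q z * p z w)
    (q' : W → ℝ) (hq'_sum : ∑ w, q' w = 1) (hq'_nonneg : ∀ w, 0 ≤ q' w) :
    -∑ z, q z * Real.log (∑ w, p z w * b w) ≤
      ∑ w, q' w * Real.log (q' w / pbar w)
        - ∑ z, ∑ w, q z * q' w * Real.log (p z w)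
        - ∑ w, q' w * Real.log (b w) :=
  bootstrapping_step_inequality_general q hq_sum hq_nonneg p hp_sum hp_pos b hb_pos pbar hpbar q'
    hq'_sum hq'_nonneg
end
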